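/- Let k ∈ ℕ, h > 0 with h ≤ 1/(√2·k), φ(x) = √(1-x²), μ(δ) = 2δ²/(4+δ²), and E = (1-μ(2kh), 1-μ(kh)]. Then for every x ∈ E: (4k²h²)/9 ≤ 1-x ≤ 2k²h², and (2kh)/3 ≤ φ(x) ≤ 2kh. Moreover the length of E satisfies (8k²h²)/9 ≤ μ(2kh) - μ(kh) ≤ (3k²h²)/2. -/
import Mathlib
set_option maxHeartbeats 1000000


noncomputable def phi (x : ℝ) : ℝ := Real.sqrt (1 - x ^ 2)

noncomputable def mu (δ : ℝ) : ℝ := 2 * δ ^ 2 / (4 + δ ^ 2)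

theorem stmt9 (k : ℕ) (hk : 1 ≤ k) (h : ℝ) (hh : 0 < h)
    (hh2 : h ≤ 1 / (Real.sqrt 2 * k)) :
    (∀ x ∈ Set.Ioc (1 - mu (2 * k * h)) (1 - mu (k * h)),
      4 * (k : ℝ) ^ 2 * h ^ 2 / 9 ≤ 1 - x ∧ 1 - x ≤ 2 * (k : ℝ) ^ 2 * h ^ 2 ∧
      2 * (k : ℝ) * h / 3 ≤ phi x ∧ phi x ≤ 2 * (k : ℝ) * h) ∧
    8 * (k : ℝ) ^ 2 * h ^ 2 / 9 ≤ mu (2 * k * h) - mu (k * h) ∧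
    mu (2 * k * h) - mu (k * h) ≤ 3 * (k : ℝ) ^ 2 * h ^ 2 / 2 := by
  have hk0 : (0:ℝ) < k := by exact_mod_cast hk
  have hkh : (0:ℝ) < (k:ℝ) * h := by positivity
  have hs2 : (0:ℝ) < Real.sqrt 2 := by positivity
  have hsq2 : Real.sqrt 2 ^ 2 = 2 := Real.sq_sqrt (by norm_num)
  have hT : 2 * (((k:ℝ) * h) ^ 2) ≤ 1 := by
    rw [le_div_iff₀ (by positivity)] at hh2
    have h1 : Real.sqrt 2 * (k:ℝ) * h ≤ 1 := by nlinarith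
    nlinarith [mul_pos (mul_pos hs2 hk0) hh]
  have hc0 : (0:ℝ) < ((k:ℝ) * h) ^ 2 := by positivity
  have hd1 : (0:ℝ) < 4 + ((k:ℝ) * h) ^ 2 := by linarith
  have hd2 : (0:ℝ) < 4 + (2 * (k:ℝ) * h) ^ 2 := by positivity
  have hmu1 : mu ((k:ℝ) * h) = 2 * ((k:ℝ) * h) ^ 2 / (4 + ((k:ℝ) * h) ^ 2) := rfl
  have hmu2 : mu (2 * (k:ℝ) * h) = 2 * (2 * (k:ℝ) * h) ^ 2 / (4 + (2 * (k:ℝ) * h) ^ 2) := rfl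
  refine ⟨?_, ?_, ?_⟩
  · rintro x ⟨hx1, hx2⟩
    rw [hmu2] at hx1
    rw [hmu1] at hx2
    have h1x_lo : 2 * ((k:ℝ) * h) ^ 2 / (4 + ((k:ℝ) * h) ^ 2) ≤ 1 - x := by linarith
    have h1x_hi : 1 - x < 2 * (2 * (k:ℝ) * h) ^ 2 / (4 + (2 * (k:ℝ) * h) ^ 2) := by linarith
    have hlo : 4 * (k:ℝ) ^ 2 * h ^ 2 / 9 ≤ 1 - x := by
      refine le_trans ?_ h1x_lo
      rw [div_le_div_iff₀ (by norm_num) hd1]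
      nlinarith [hT, hc0]
    have hhi : 1 - x ≤ 2 * (k:ℝ) ^ 2 * h ^ 2 := by
      have hb : 2 * (2 * (k:ℝ) * h) ^ 2 / (4 + (2 * (k:ℝ) * h) ^ 2) ≤ 2 * (k:ℝ) ^ 2 * h ^ 2 := by
        rw [div_le_iff₀ hd2]
        nlinarith [hc0]
      linarith
    have hx_le1 : x ≤ 1 := by nlinarith [hlo, hk0, hh]
    have hx_ge : 0 ≤ x := by nlinarith [hhi, hT]
    have hsq_lo : (2 * (k:ℝ) * h / 3) ^ 2 ≤ 1 - x ^ 2 := by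
      nlinarith [hlo, mul_nonneg (sub_nonneg.mpr hx_le1) hx_ge]
    have hsq_hi : 1 - x ^ 2 ≤ (2 * (k:ℝ) * h) ^ 2 := by
      nlinarith [hhi, sq_nonneg (1 - x)]
    refine ⟨hlo, hhi, ?_, ?_⟩
    · rw [phi, show (2 * (k:ℝ) * h / 3) = Real.sqrt ((2 * (k:ℝ) * h / 3) ^ 2) by
        rw [Real.sqrt_sq (by positivity)]]
      exact Real.sqrt_le_sqrt hsq_lo
    · rw [phi, show (2 * (k:ℝ) * h) = Real.sqrt ((2 * (k:ℝ) * h) ^ 2) by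
        rw [Real.sqrt_sq (by positivity)]]
      exact Real.sqrt_le_sqrt hsq_hi
  · rw [hmu1, hmu2, div_sub_div _ _ (ne_of_gt hd2) (ne_of_gt hd1),
      div_le_div_iff₀ (by norm_num : (0:ℝ) < 9) (mul_pos hd2 hd1)]
    have hu1 : 2 * (((k:ℝ) * h) ^ 2) ^ 2 ≤ ((k:ℝ) * h) ^ 2 := by nlinarith [hT, hc0]
    have hu2 : 2 * (((k:ℝ) * h) ^ 2) ^ 3 ≤ (((k:ℝ) * h) ^ 2) ^ 2 := by
      nlinarith [hu1, hc0, mul_pos hc0 hc0]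
    nlinarith [hu1, hu2, hc0]
  · rw [hmu1, hmu2, div_sub_div _ _ (ne_of_gt hd2) (ne_of_gt hd1),
      div_le_div_iff₀ (mul_pos hd2 hd1) (by norm_num : (0:ℝ) < 2)]
    nlinarith [hc0, mul_pos hc0 hc0, mul_pos (mul_pos hc0 hc0) hc0]
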